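/- arXiv:2107.09165 — 2 statements merged into one kernel-verified Lean document; each statement's English description precedes it below -/
import Mathlib

section
/- Let K = ℚ_p^{ur} be the maximal unramified extension of ℚ_p inside a fixed algebraic closure ℚ̄_p, let ℂ_p be the completion of ℚ̄_p, and let M be the topological closure of K in ℂ_p. Then M ∩ ℚ̄_p = K: every element of ℚ̄_p that lies in the completion of ℚ_p^{ur} is already in ℚ_p^{ur}. -/
/-!
Since `ℚ_p` has characteristic zero, an algebraic `x` is a simple root of its minimal polynomial,
so the Newton map of that polynomial contracts a neighbourhood of `x` towards `x`. Pick `y ∈ K`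
in this neighbourhood: the Newton iterates starting at `y` stay in `ℚ_p(y)`, which is
finite-dimensional over the complete field `ℚ_p` and hence closed in `C`, so their limit `x` lies
in `ℚ_p(y) ⊆ K`.
-/

open Polynomial Filter Topology

namespace Polynomial

theorem newtonMap_map {R S : Type*} [CommRing R] [CommRing S] [Algebra R S] (P : R[X]) (z : S) :
    (P.map (algebraMap R S)).newtonMap z = P.newtonMap z := by
  simp only [newtonMap_apply, derivative_map, aeval_map_algebraMap]

theorem newtonMap_sub_eq_mul {F : Type*} [Field F] {P : F[X]} {x : F} (hx : P.IsRoot x) (z : F) :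
    P.newtonMap z - x = (z - x) * (1 - (P /ₘ (X - C x)).eval z / (derivative P).eval z) := by
  have hfactor : P.eval z = (z - x) * (P /ₘ (X - C x)).eval z := by
    conv_lhs => rw [← mul_divByMonic_eq_iff_isRoot.2 hx]
    simp only [eval_mul, eval_sub, eval_X, eval_C]
  rw [newtonMap_apply, coe_aeval_eq_eval, Ring.inverse_eq_inv', hfactor]
  ring

theorem eval_divByMonic_X_sub_C_self {R : Type*} [CommRing R] (P : R[X]) (x : R) :
    (P /ₘ (X - C x)).eval x = (derivative P).eval x := by
  simpa using congrArg (eval x) (divByMonic_add_X_sub_C_mul_derivative_divByMonic_eq_derivative P x)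

theorem eventually_norm_newtonMap_sub_le {F : Type*} [NormedField F] {P : F[X]} {x : F}
    (hx : P.IsRoot x) (hP' : (derivative P).eval x ≠ 0) {c : ℝ} (hc : 0 < c) :
    ∀ᶠ z in 𝓝 x, ‖P.newtonMap z - x‖ ≤ c * ‖z - x‖ := by
  set D := P /ₘ (X - C x)
  have hcont : ContinuousAt (fun z => 1 - D.eval z / (derivative P).eval z) x :=
    continuousAt_const.sub (D.continuousAt.div (derivative P).continuousAt hP')
  have hzero : 1 - D.eval x / (derivative P).eval x = 0 := by
    rw [eval_divByMonic_X_sub_C_self, div_self hP', sub_self]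
  have hsmall := hcont.norm.eventually_lt_const (u := c) (by simpa [hzero] using hc)
  filter_upwards [hsmall] with z hz
  rw [newtonMap_sub_eq_mul hx, norm_mul, mul_comm]
  gcongr

end Polynomial

theorem eventually_tendsto_iterate_of_eventually_dist_le {X : Type*} [PseudoMetricSpace X]
    {g : X → X} {x : X} {c : ℝ} (hc₀ : 0 ≤ c) (hc₁ : c < 1)
    (hg : ∀ᶠ z in 𝓝 x, dist (g z) x ≤ c * dist z x) :
    ∀ᶠ y in 𝓝 x, Tendsto (fun n => g^[n] y) atTop (𝓝 x) := by
  obtain ⟨ρ, hρ, hball⟩ := Metric.eventually_nhds_iff_ball.1 hg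
  filter_upwards [Metric.ball_mem_nhds x hρ] with y hy
  have hbound : ∀ n, dist (g^[n] y) x ≤ c ^ n * dist y x := by
    intro n
    induction n with
    | zero => simp
    | succ n ih =>
      have hn : dist (g^[n] y) x < ρ :=
        ih.trans_lt <| (mul_le_of_le_one_left dist_nonneg (pow_le_one₀ hc₀ hc₁.le)).trans_lt
          (Metric.mem_ball.1 hy)
      calc dist (g^[n + 1] y) x = dist (g (g^[n] y)) x := by rw [Function.iterate_succ_apply']
        _ ≤ c * dist (g^[n] y) x := hball _ hn
        _ ≤ c * (c ^ n * dist y x) := by gcongr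
        _ = c ^ (n + 1) * dist y x := by ring
  rw [tendsto_iff_dist_tendsto_zero]
  refine squeeze_zero (fun _ => dist_nonneg) hbound ?_
  simpa using (tendsto_pow_atTop_nhds_zero_of_lt_one hc₀ hc₁).mul_const (dist y x)

namespace IntermediateField

theorem newtonMap_mem {F L : Type*} [Field F] [Field L] [Algebra F L] (E : IntermediateField F L)
    (P : F[X]) {z : L} (hz : z ∈ E) : P.newtonMap z ∈ E := by
  have haeval : ∀ Q : F[X], aeval z Q ∈ E := fun Q => by
    rw [show z = ((⟨z, hz⟩ : E) : L) from rfl, aeval_coe]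
    exact SetLike.coe_mem _
  rw [newtonMap_apply, Ring.inverse_eq_inv']
  exact sub_mem hz (mul_mem (inv_mem (haeval _)) (haeval _))

variable {𝕜 L : Type*} [NontriviallyNormedField 𝕜] [CompleteSpace 𝕜] [NormedField L]
  [NormedAlgebra 𝕜 L]

theorem isClosed_of_finiteDimensional (E : IntermediateField 𝕜 L) [FiniteDimensional 𝕜 E] :
    IsClosed (E : Set L) :=
  Submodule.closed_of_finiteDimensional (Subalgebra.toSubmodule E.toSubalgebra)

theorem eventually_mem_adjoin_simple {x : L} (hx : IsSeparable 𝕜 x) :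
    ∀ᶠ y in 𝓝 x, IsIntegral 𝕜 y → x ∈ 𝕜⟮y⟯ := by
  set P := (minpoly 𝕜 x).map (algebraMap 𝕜 L) with hP
  have hroot : P.IsRoot x := by simp [P, IsRoot, eval_map_algebraMap]
  have hP' : (derivative P).eval x ≠ 0 := by
    simpa [P, derivative_map, eval_map_algebraMap] using
      hx.aeval_derivative_ne_zero (minpoly.aeval 𝕜 x)
  have hcontract : ∀ᶠ z in 𝓝 x, dist (P.newtonMap z) x ≤ 1 / 2 * dist z x := by
    simpa only [dist_eq_norm] using eventually_norm_newtonMap_sub_le hroot hP' one_half_pos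
  have hconv := eventually_tendsto_iterate_of_eventually_dist_le (by norm_num) (by norm_num)
    hcontract
  filter_upwards [hconv] with y hy hyint
  have := adjoin.finiteDimensional hyint
  refine (isClosed_of_finiteDimensional 𝕜⟮y⟯).mem_of_tendsto hy (Eventually.of_forall fun n => ?_)
  refine Set.MapsTo.iterate (fun z hz => ?_) n (mem_adjoin_simple_self 𝕜 y)
  rw [SetLike.mem_coe, hP, newtonMap_map]
  exact newtonMap_mem _ _ hz

theorem mem_of_mem_closure_of_isSeparable (K : IntermediateField 𝕜 L) [Algebra.IsAlgebraic 𝕜 K]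
    {x : L} (hcl : x ∈ closure (K : Set L)) (hx : IsSeparable 𝕜 x) : x ∈ K := by
  obtain ⟨y, hyK, hy⟩ :=
    ((mem_closure_iff_frequently.1 hcl).and_eventually (eventually_mem_adjoin_simple hx)).exists
  exact adjoin_simple_le_iff.2 hyK (hy (isIntegral_iff.1
    (Algebra.IsIntegral.isIntegral (⟨y, hyK⟩ : K))))

end IntermediateField

theorem statement12_general (p : ℕ) [Fact p.Prime]
    (C : Type*) [NormedField C]
    [Algebra ℚ_[p] C] (hisom : ∀ x : ℚ_[p], ‖algebraMap ℚ_[p] C x‖ = ‖x‖)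
    (K : Subfield C)
    (hK : K = Subfield.closure
      (Set.range (algebraMap ℚ_[p] C) ∪
        {x : C | ∃ m : ℕ, 0 < m ∧ Nat.Coprime m p ∧ x ^ m = 1})) :
    {x : C | x ∈ closure (K : Set C) ∧ IsAlgebraic ℚ_[p] x} = (K : Set C) := by
  let : NormedAlgebra ℚ_[p] C :=
    { norm_smul_le := fun c v => by rw [Algebra.smul_def, norm_mul, hisom] }
  set μ := {x : C | ∃ m : ℕ, 0 < m ∧ Nat.Coprime m p ∧ x ^ m = 1}
  have hμ : ∀ x ∈ μ, IsIntegral ℚ_[p] x := fun x ⟨m, hm, _, hxm⟩ =>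
    IsIntegral.of_pow hm (hxm ▸ isIntegral_one)
  have := IntermediateField.isAlgebraic_adjoin hμ
  have hKadj : (K : Set C) = IntermediateField.adjoin ℚ_[p] μ := by
    rw [hK, ← IntermediateField.adjoin_toSubfield]; rfl
  rw [hKadj]
  ext x
  refine ⟨fun ⟨hcl, halg⟩ => IntermediateField.mem_of_mem_closure_of_isSeparable _ hcl
    (minpoly.irreducible halg.isIntegral).separable, fun hx => ⟨subset_closure hx, ?_⟩⟩
  exact IntermediateField.isAlgebraic_iff.1 (Algebra.IsAlgebraic.isAlgebraic (⟨x, hx⟩ : _))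

/-- Let `K = ℚ_p^{ur}` be the maximal unramified extension of `ℚ_p`
(equivalently, the extension of `ℚ_p` generated by all roots of unity of order prime
to `p`) inside `ℂ_p`, realized here inside an arbitrary complete ultrametric normed
field `C` which is isometrically an algebra over `ℚ_p`. Let `M` be the topological
closure of `K` in `C`. Then `M ∩ ℚ̄_p = K`: an element of `C` lying in the closure of
`K` is algebraic over `ℚ_p` if and only if it already lies in `K`. -/
theorem statement12 (p : ℕ) [Fact p.Prime]
    (C : Type*) [NormedField C] [CompleteSpace C] [IsUltrametricDist C]
    [Algebra ℚ_[p] C] (hisom : ∀ x : ℚ_[p], ‖algebraMap ℚ_[p] C x‖ = ‖x‖)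
    (K : Subfield C)
    (hK : K = Subfield.closure
      (Set.range (algebraMap ℚ_[p] C) ∪
        {x : C | ∃ m : ℕ, 0 < m ∧ Nat.Coprime m p ∧ x ^ m = 1})) :
    {x : C | x ∈ closure (K : Set C) ∧ IsAlgebraic ℚ_[p] x} = (K : Set C) :=
  statement12_general p C hisom K hK
end

section
/- Let A be an abelian group, p a prime, and B = {(u_n)_{n≥0} : u_n ∈ A, p·u_{n+1} = u_n} the inverse limit of A along multiplication by p. Then the set Per(B) of periodic sequences in B is a subgroup of B, and the map (u_n) ↦ u_0 restricts to a group isomorphism from Per(B) onto the subgroup of elements of A of finite order coprime to p. -/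
/-!
Along a path, `p ^ k • u (n + k) = u n`. If the path has period `k`, then `u 0` is fixed by
`p ^ k`, hence killed by `p ^ k - 1`, which is prime to `p`; and if moreover `u 0 = 0`, then
`p ^ n • u n = 0` while `u n = p ^ (k * n) • u n`, so the path vanishes. Conversely, if `m • a = 0`
with `m` prime to `p`, Euler's theorem gives `p ^ t • a = a` for `t = φ m`, and
`n ↦ p ^ ((t - 1) * n) • a` is a path through `a` of period `t`.
-/

/-- The group of paths in `A`: sequences `(u_n)` with `p • u_{n+1} = u_n`, viewed as an
additive subgroup of `ℕ → A`. -/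
def pathsSubgroup (p : ℕ) (A : Type*) [AddCommGroup A] : AddSubgroup (ℕ → A) where
  carrier := {u | ∀ n, p • u (n + 1) = u n}
  zero_mem' := by intro n; simp
  add_mem' := by
    intro a b ha hb n
    simp only [Pi.add_apply, smul_add, ha n, hb n]
  neg_mem' := by
    intro a ha n
    simp only [Pi.neg_apply, smul_neg, ha n]

open Function

section NSMul

variable {A : Type*} [AddCommGroup A]

theorem pow_smul_eq_self_of_smul_eq_self {N : ℕ} {a : A} (h : N • a = a) (j : ℕ) :
    N ^ j • a = a := by
  have := (show IsFixedPt (N • ·) a from h).iterate j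
  rwa [smul_iterate] at this

theorem exists_coprime_nsmul_eq_zero_of_pow_smul_eq_self {p : ℕ} (hp : 1 < p) {k : ℕ}
    (hk : 1 ≤ k) {a : A} (h : p ^ k • a = a) : ∃ m, 1 ≤ m ∧ m.Coprime p ∧ m • a = 0 := by
  have hpk : p ≤ p ^ k := le_self_pow (by omega) (by omega)
  refine ⟨p ^ k - 1, by omega, ?_, by rw [sub_nsmul _ (by omega), h, one_smul, add_neg_cancel]⟩
  exact ((Nat.coprime_self_sub_left (by omega)).2 (Nat.coprime_one_left _)).coprime_dvd_right
    (dvd_pow_self p (by omega))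

theorem exists_pow_smul_eq_self_of_coprime {p m : ℕ} (hm : 1 ≤ m) (hco : m.Coprime p) {a : A}
    (hma : m • a = 0) : ∃ t, 1 ≤ t ∧ p ^ t • a = a := by
  refine ⟨m.totient, Nat.totient_pos.2 hm, ?_⟩
  have hmod : p ^ m.totient ≡ 1 [MOD addOrderOf a] :=
    (Nat.ModEq.pow_totient hco.symm).of_dvd (addOrderOf_dvd_of_nsmul_eq_zero hma)
  simpa only [one_smul] using nsmul_eq_nsmul_iff_modEq.2 hmod

end NSMul

section Paths

variable {p : ℕ} {A : Type*} [AddCommGroup A]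

theorem mem_pathsSubgroup {u : ℕ → A} : u ∈ pathsSubgroup p A ↔ ∀ n, p • u (n + 1) = u n :=
  Iff.rfl

namespace pathsSubgroup

theorem pow_smul_apply_add {u : ℕ → A} (hu : u ∈ pathsSubgroup p A) (k n : ℕ) :
    p ^ k • u (n + k) = u n := by
  induction k with
  | zero => simp
  | succ k ih => rw [pow_succ, mul_smul, ← add_assoc, mem_pathsSubgroup.1 hu, ih]

theorem pow_smul_eq_self_of_periodic {u : ℕ → A} (hu : u ∈ pathsSubgroup p A) {k : ℕ}
    (hk : Periodic u k) (n : ℕ) : p ^ k • u n = u n := by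
  simpa only [hk n] using pow_smul_apply_add hu k n

theorem eq_zero_of_periodic {u : ℕ → A} (hu : u ∈ pathsSubgroup p A) {k : ℕ} (hk1 : 1 ≤ k)
    (hk : Periodic u k) (h0 : u 0 = 0) : u = 0 := by
  obtain ⟨j, rfl⟩ : ∃ j, k = j + 1 := ⟨k - 1, by omega⟩
  funext n
  calc u n = (p ^ (j + 1)) ^ n • u n :=
        (pow_smul_eq_self_of_smul_eq_self (pow_smul_eq_self_of_periodic hu hk n) n).symm
    _ = p ^ (j * n) • p ^ n • u (0 + n) := by
        rw [smul_smul, ← pow_mul, ← pow_add, zero_add]; ring_nf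
    _ = 0 := by rw [pow_smul_apply_add hu, h0, smul_zero]

end pathsSubgroup

open pathsSubgroup

variable (p A) in
def periodicPaths : AddSubgroup (pathsSubgroup p A) where
  carrier := {u | ∃ k, 1 ≤ k ∧ Periodic (u : ℕ → A) k}
  zero_mem' := ⟨1, le_rfl, fun _ => rfl⟩
  add_mem' := by
    rintro u v ⟨k, hk, hu⟩ ⟨l, hl, hv⟩
    exact ⟨l * k, Nat.mul_le_mul hl hk, (hu.nat_mul l).add (mul_comm k l ▸ hv.nat_mul k)⟩
  neg_mem' := by
    rintro u ⟨k, hk, hu⟩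
    exact ⟨k, hk, hu.comp Neg.neg⟩

theorem mem_periodicPaths {u : pathsSubgroup p A} :
    u ∈ periodicPaths p A ↔ ∃ k, 1 ≤ k ∧ ∀ n, (u : ℕ → A) (n + k) = (u : ℕ → A) n :=
  Iff.rfl

namespace periodicPaths

variable (p A) in
def evalZero : periodicPaths p A →+ A :=
  ((Pi.evalAddMonoidHom (fun _ : ℕ => A) 0).comp (pathsSubgroup p A).subtype).comp
    (periodicPaths p A).subtype

theorem evalZero_apply (u : periodicPaths p A) :
    evalZero p A u = ((u : pathsSubgroup p A) : ℕ → A) 0 :=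
  rfl

theorem evalZero_injective : Injective (evalZero p A) := by
  refine (injective_iff_map_eq_zero _).2 fun ⟨⟨u, hu⟩, k, hk1, hk⟩ h0 => ?_
  obtain rfl : u = 0 := eq_zero_of_periodic hu hk1 hk h0
  rfl

theorem mem_range_evalZero_of_pow_smul_eq_self {t : ℕ} (ht : 1 ≤ t) {a : A}
    (h : p ^ t • a = a) : a ∈ (evalZero p A).range := by
  obtain ⟨s, rfl⟩ : ∃ s, t = s + 1 := ⟨t - 1, by omega⟩
  let u : ℕ → A := fun n => p ^ (s * n) • a
  have hu : u ∈ pathsSubgroup p A := fun n => by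
    calc p • p ^ (s * (n + 1)) • a = p ^ (s * n) • p ^ (s + 1) • a := by
          rw [smul_smul, smul_smul, ← pow_succ', ← pow_add]; ring_nf
      _ = p ^ (s * n) • a := by rw [h]
  have hper : Periodic u (s + 1) := fun n => by
    calc p ^ (s * (n + (s + 1))) • a = p ^ (s * n) • (p ^ (s + 1)) ^ s • a := by
          rw [smul_smul, ← pow_mul, ← pow_add]; ring_nf
      _ = p ^ (s * n) • a := by rw [pow_smul_eq_self_of_smul_eq_self h]
  exact ⟨⟨⟨u, hu⟩, s + 1, by omega, hper⟩, by simp [evalZero_apply, u]⟩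

theorem mem_range_evalZero_iff (hp : 1 < p) {a : A} :
    a ∈ (evalZero p A).range ↔ ∃ m, 1 ≤ m ∧ m.Coprime p ∧ m • a = 0 := by
  constructor
  · rintro ⟨⟨u, k, hk, hper⟩, rfl⟩
    exact exists_coprime_nsmul_eq_zero_of_pow_smul_eq_self hp hk
      (pow_smul_eq_self_of_periodic u.2 hper 0)
  · rintro ⟨m, hm, hco, hma⟩
    obtain ⟨t, ht, hfix⟩ := exists_pow_smul_eq_self_of_coprime hm hco hma
    exact mem_range_evalZero_of_pow_smul_eq_self ht hfix

end periodicPaths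

end Paths

open periodicPaths in
/-- The set `Per(B)` of periodic sequences in the inverse limit
`B = lim← (A ←[p]− A ⋯)` is a subgroup of `B`, and `(u_n) ↦ u_0` restricts to a group
isomorphism from `Per(B)` onto the subgroup of elements of `A` of finite order coprime
to `p`. -/
theorem statement15 (p : ℕ) (hp : p.Prime) (A : Type*) [AddCommGroup A] :
    ∃ (Per : AddSubgroup (pathsSubgroup p A)) (Tor : AddSubgroup A)
      (e : Per ≃+ Tor),
      (∀ u : pathsSubgroup p A,
        u ∈ Per ↔ ∃ k, 1 ≤ k ∧ ∀ n, (u : ℕ → A) (n + k) = (u : ℕ → A) n) ∧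
      (∀ a : A, a ∈ Tor ↔ ∃ m, 1 ≤ m ∧ Nat.Coprime m p ∧ m • a = 0) ∧
      (∀ u : Per, (e u : A) = ((u : pathsSubgroup p A) : ℕ → A) 0) :=
  ⟨periodicPaths p A, (evalZero p A).range, AddMonoidHom.ofInjective evalZero_injective,
    fun _ => mem_periodicPaths, fun _ => mem_range_evalZero_iff hp.one_lt, fun _ => rfl⟩
end
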